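/- Let A be a left brace and let a ∈ ζ₂(⋆,A) be an element of infinite additive order. Let c = a ⋆ a. If c also has infinite additive order, then br(2a), the subbrace generated by 2a = a + a, is not an ideal of A. -/

import Mathlib

/-!
Basic theory of left braces (skew left braces of abelian type), following
Dixon–Kurdachenko–Subbotin, "On the structure of braces whose subideals are ideals".
-/

universe u v

/-- A left brace: an abelian group `(A,+)`, a group `(A,·)`, satisfying
`a(b+c) = ab + ac - a`.  (The additive and multiplicative identities then coincide.) -/
class LeftBrace (A : Type u) extends AddCommGroup A, Group A where
  mul_add_eq : ∀ a b c : A, a * (b + c) = a * b + a * c - a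

namespace LeftBrace

variable {A : Type u} [LeftBrace A]

/-- The star operation `a ⋆ b = ab - a - b`. -/
def bstar (a b : A) : A := a * b - a - b

/-- A subset of a left brace is a subbrace if it is closed under the additive-group
and multiplicative-group operations (equivalently, it is a left brace under the
restricted operations). -/
structure IsSubbrace (S : Set A) : Prop where
  zero_mem : (0 : A) ∈ S
  add_mem : ∀ {a b : A}, a ∈ S → b ∈ S → a + b ∈ S
  neg_mem : ∀ {a : A}, a ∈ S → -a ∈ S
  mul_mem : ∀ {a b : A}, a ∈ S → b ∈ S → a * b ∈ S
  inv_mem : ∀ {a : A}, a ∈ S → a⁻¹ ∈ S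

/-- `I` is an ideal of the subbrace `J`: `I ⊆ J`, both are subbraces, and
`a ⋆ z, z ⋆ a ∈ I` for all `a ∈ J`, `z ∈ I`. -/
structure IsIdealIn (I J : Set A) : Prop where
  subset : I ⊆ J
  subbrace : IsSubbrace I
  ambient_subbrace : IsSubbrace J
  star_mem_left : ∀ a ∈ J, ∀ z ∈ I, bstar a z ∈ I
  star_mem_right : ∀ a ∈ J, ∀ z ∈ I, bstar z a ∈ I

/-- `I` is an ideal of the brace `A`. -/
def IsIdeal (I : Set A) : Prop := IsIdealIn I (Set.univ : Set A)

/-- `A` is a T-brace if being an ideal is a transitive relation: an ideal of an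
ideal of `A` is an ideal of `A`. -/
def IsTBrace (A : Type u) [LeftBrace A] : Prop :=
  ∀ I J : Set A, IsIdealIn I J → IsIdeal J → IsIdeal I

/-- The `⋆`-center `ζ(⋆,A) = {a | a ⋆ x = x ⋆ a = 0 for all x}`. -/
def starCenter (A : Type u) [LeftBrace A] : Set A :=
  {a : A | ∀ x : A, bstar a x = 0 ∧ bstar x a = 0}

/-- The preimage in `A` of the `⋆`-center of the quotient of `A` by (the ideal) `S`:
`a` belongs to it iff `a ⋆ x ∈ S` and `x ⋆ a ∈ S` for every `x ∈ A`. -/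
def nextCenter (A : Type u) [LeftBrace A] (S : Set A) : Set A :=
  {a : A | ∀ x : A, bstar a x ∈ S ∧ bstar x a ∈ S}

/-- The upper `⋆`-central series, indexed by naturals:
`ζ₀(⋆,A) = 0` and `ζ_{n+1}(⋆,A)/ζ_n(⋆,A) = ζ(⋆, A/ζ_n(⋆,A))`. -/
def zetaNat (A : Type u) [LeftBrace A] : ℕ → Set A
  | 0 => ({0} : Set A)
  | n + 1 => nextCenter A (zetaNat A n)

/-- The upper `⋆`-central series, indexed by ordinals (unions at limit ordinals). -/
noncomputable def zetaOrd (A : Type u) [LeftBrace A] (o : Ordinal.{v}) : Set A :=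
  Ordinal.limitRecOn o (({0} : Set A))
    (fun _ ih => nextCenter A ih)
    (fun o _ ih => ⋃ (o' : Ordinal) (h : o' < o), ih o' h)

/-- The upper `⋆`-hypercenter `ζ_∞(⋆,A)`: the final (stable) term of the upper
`⋆`-central series, i.e. the union of all its terms. -/
noncomputable def starHypercenter (A : Type u) [LeftBrace A] : Set A :=
  ⋃ o : Ordinal.{u}, zetaOrd A o

/-- `A` is `⋆`-hypercentral if `A = ζ_γ(⋆,A)` for some ordinal `γ`. -/
def IsStarHypercentral (A : Type u) [LeftBrace A] : Prop :=
  ∃ γ : Ordinal.{u}, zetaOrd A γ = (Set.univ : Set A)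

/-- `K ⋆ L`: the additive subgroup of `(A,+)` generated by all `x ⋆ y`, `x ∈ K`, `y ∈ L`. -/
def setStar (K L : Set A) : AddSubgroup A :=
  AddSubgroup.closure {z : A | ∃ x ∈ K, ∃ y ∈ L, z = bstar x y}

/-- `rightStarSeries A n = A^{(n+1)}`, where `A^{(1)} = A` and `A^{(n+1)} = A^{(n)} ⋆ A`. -/
def rightStarSeries (A : Type u) [LeftBrace A] : ℕ → Set A
  | 0 => (Set.univ : Set A)
  | n + 1 => ((setStar (rightStarSeries A n) (Set.univ : Set A) : AddSubgroup A) : Set A)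

/-- `leftStarSeries A n = A^{n+1}`, where `A^1 = A` and `A^{n+1} = A ⋆ A^n`. -/
def leftStarSeries (A : Type u) [LeftBrace A] : ℕ → Set A
  | 0 => (Set.univ : Set A)
  | n + 1 => ((setStar (Set.univ : Set A) (leftStarSeries A n) : AddSubgroup A) : Set A)

/-- `A` is Smoktunowicz-nilpotent if `A^{(n)} = A^k = 0` for some naturals `n, k`. -/
def IsSmoktunowiczNilpotent (A : Type u) [LeftBrace A] : Prop :=
  ∃ n k : ℕ, rightStarSeries A n = ({0} : Set A) ∧ leftStarSeries A k = ({0} : Set A)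

/-- The subbrace generated by a subset `M`: the intersection of all subbraces containing `M`. -/
def braceClosure (M : Set A) : Set A := ⋂₀ {S : Set A | IsSubbrace S ∧ M ⊆ S}

end LeftBrace

/-!
Every element of `br(2a)` lies in `S = {2m·a + 4k·c | m, k ∈ ℤ}`, where `c = a ⋆ a`.
Indeed `c` is `⋆`-central and, as `a ∈ ζ₂(⋆,A)`, `(m·a) ⋆ (n·a) = mn·c`; so the `⋆`-product of
two elements of `S` is a multiple of `4c`, which makes `S` closed under `x y = x ⋆ y + x + y` and
under inverses, i.e. a subbrace containing `2a`. If `br(2a)` were an ideal, `a ⋆ 2a = 2c` would lie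
in `S`, say `2c = 2m·a + 4k·c`; applying `· ⋆ a` gives `0 = 2m·c`, so `m = 0` and `2c = 4k·c`,
which is impossible when `c` has infinite order.
-/

namespace LeftBrace

variable {A : Type u} [LeftBrace A]

theorem subset_braceClosure (M : Set A) : M ⊆ braceClosure M :=
  fun _ hx => Set.mem_sInter.mpr fun _ hS => hS.2 hx

theorem braceClosure_subset {M S : Set A} (hS : IsSubbrace S) (hM : M ⊆ S) :
    braceClosure M ⊆ S :=
  Set.sInter_subset_of_mem ⟨hS, hM⟩

theorem mul_zero_eq_self (a : A) : a * 0 = a := by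
  have h := mul_add_eq a 0 0
  rw [add_zero, add_sub_assoc, left_eq_add] at h
  exact sub_eq_zero.mp h

theorem one_eq_zero : (1 : A) = 0 := by
  simpa using (mul_zero_eq_self (1 : A)).symm

theorem zero_mul_eq_self (a : A) : 0 * a = a := by
  rw [← one_eq_zero, one_mul]

theorem mul_sub_eq (x y z : A) : x * (y - z) = x * y - x * z + x := by
  have h := mul_add_eq x (y - z) z
  rw [sub_add_cancel] at h
  rw [h]; abel

theorem mul_eq_bstar_add_add (x y : A) : x * y = bstar x y + x + y := by
  rw [bstar]; abel

theorem bstar_zero_left (x : A) : bstar 0 x = 0 := by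
  rw [bstar, zero_mul_eq_self]; abel

theorem bstar_add_right (x y z : A) : bstar x (y + z) = bstar x y + bstar x z := by
  simp only [bstar, mul_add_eq]
  abel

def bstarAddHom (x : A) : A →+ A := AddMonoidHom.mk' (bstar x) (bstar_add_right x)

theorem bstar_zsmul_right (x y : A) (n : ℤ) : bstar x (n • y) = n • bstar x y :=
  map_zsmul (bstarAddHom x) n y

theorem bstar_mul_left (x y z : A) :
    bstar (x * y) z = bstar x (bstar y z) + bstar y z + bstar x z := by
  simp only [bstar, mul_sub_eq, mul_assoc]
  abel

section StarCenter

variable {c : A} (hc : c ∈ starCenter A)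
include hc

theorem mul_eq_add_of_mem_starCenter (y : A) : c * y = c + y := by
  have h := (hc y).1
  rw [bstar, sub_sub] at h
  exact sub_eq_zero.mp h

theorem bstar_add_left_of_mem_starCenter (y x : A) : bstar (c + y) x = bstar y x := by
  rw [← mul_eq_add_of_mem_starCenter hc, bstar_mul_left, (hc _).1, (hc _).1]
  abel

theorem bstar_zsmul_add_left_of_mem_starCenter (n : ℤ) (y x : A) :
    bstar (n • c + y) x = bstar y x := by
  induction n using Int.induction_on with
  | zero => rw [zero_zsmul, zero_add]
  | succ k ih => rw [add_zsmul, one_zsmul, add_comm _ c, add_assoc,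
      bstar_add_left_of_mem_starCenter hc, ih]
  | pred k ih =>
      rw [← ih, ← bstar_add_left_of_mem_starCenter hc, ← add_assoc, add_comm c, sub_zsmul,
        one_zsmul, neg_add_cancel_right]

theorem zsmul_bstar_eq_zero_of_mem_starCenter (n : ℤ) (x : A) : bstar (n • c) x = 0 := by
  rw [← add_zero (n • c), bstar_zsmul_add_left_of_mem_starCenter hc, bstar_zero_left]

theorem bstar_add_zsmul_right_of_mem_starCenter (n : ℤ) (x y : A) :
    bstar x (y + n • c) = bstar x y := by
  rw [bstar_add_right, bstar_zsmul_right, (hc x).2, zsmul_zero, add_zero]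

end StarCenter

theorem mem_zetaNat_two_iff {a : A} :
    a ∈ zetaNat A 2 ↔ ∀ x, bstar a x ∈ starCenter A ∧ bstar x a ∈ starCenter A :=
  Iff.rfl

section ZetaTwo

variable {a : A} (ha : a ∈ zetaNat A 2)
include ha

theorem bstar_self_mem_starCenter_of_mem_zetaNat_two : bstar a a ∈ starCenter A :=
  (mem_zetaNat_two_iff.mp ha a).1

theorem zsmul_bstar_of_mem_zetaNat_two (n : ℤ) : bstar (n • a) a = n • bstar a a := by
  have step (m : ℤ) : bstar ((m + 1) • a) a = bstar (m • a) a + bstar a a := by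
    -- `a ⋆ (m·a)` is `⋆`-central, so it drops out of `· ⋆ a`
    have hsplit : (m + 1) • a = (-1 : ℤ) • bstar a (m • a) + a * (m • a) := by
      rw [mul_eq_bstar_add_add, add_zsmul, one_zsmul, neg_one_zsmul]; abel
    rw [hsplit, bstar_zsmul_add_left_of_mem_starCenter (mem_zetaNat_two_iff.mp ha _).1,
      bstar_mul_left, ((mem_zetaNat_two_iff.mp ha _).2 _).2]
    abel
  induction n using Int.induction_on with
  | zero => rw [zero_zsmul, zero_zsmul, bstar_zero_left]
  | succ k ih => rw [step, ih, add_zsmul, one_zsmul]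
  | pred k ih =>
      have h := step (-(k : ℤ) - 1)
      rw [sub_add_cancel, ih] at h
      rw [eq_sub_of_add_eq h.symm, sub_zsmul, one_zsmul, sub_eq_add_neg]

theorem zsmul_bstar_zsmul_of_mem_zetaNat_two (m n : ℤ) :
    bstar (m • a) (n • a) = (m * n) • bstar a a := by
  rw [bstar_zsmul_right, zsmul_bstar_of_mem_zetaNat_two ha, smul_smul, mul_comm]

end ZetaTwo

def evenSpan (a : A) : Set A := {x | ∃ m k : ℤ, (2 * m) • a + (4 * k) • bstar a a = x}

section EvenSpan

variable {a : A} (ha : a ∈ zetaNat A 2)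
include ha

theorem bstar_evenSpan (m k m' k' : ℤ) :
    bstar ((2 * m) • a + (4 * k) • bstar a a) ((2 * m') • a + (4 * k') • bstar a a) =
      (4 * (m * m')) • bstar a a := by
  have hc := bstar_self_mem_starCenter_of_mem_zetaNat_two ha
  rw [bstar_add_zsmul_right_of_mem_starCenter hc, add_comm,
    bstar_zsmul_add_left_of_mem_starCenter hc, zsmul_bstar_zsmul_of_mem_zetaNat_two ha]
  ring_nf

theorem isSubbrace_evenSpan : IsSubbrace (evenSpan a) where
  zero_mem := ⟨0, 0, by simp⟩
  add_mem := by
    rintro _ _ ⟨m, k, rfl⟩ ⟨m', k', rfl⟩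
    refine ⟨m + m', k + k', ?_⟩
    simp only [mul_add, add_zsmul]
    abel
  neg_mem := by
    rintro _ ⟨m, k, rfl⟩
    refine ⟨-m, -k, ?_⟩
    simp only [mul_neg, neg_zsmul]
    abel
  mul_mem := by
    rintro _ _ ⟨m, k, rfl⟩ ⟨m', k', rfl⟩
    refine ⟨m + m', m * m' + k + k', ?_⟩
    rw [mul_eq_bstar_add_add, bstar_evenSpan ha]
    simp only [mul_add, add_zsmul]
    abel
  inv_mem := by
    rintro _ ⟨m, k, rfl⟩
    refine ⟨-m, m * m - k, (inv_eq_of_mul_eq_one_right ?_).symm⟩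
    rw [mul_eq_bstar_add_add, bstar_evenSpan ha, one_eq_zero]
    simp only [mul_neg, mul_sub, neg_zsmul, sub_zsmul]
    abel

theorem bstar_add_self_not_mem_evenSpan (hinf : ¬IsOfFinAddOrder (bstar a a)) :
    bstar a (a + a) ∉ evenSpan a := by
  have hinj := injective_zsmul_iff_not_isOfFinAddOrder.mpr hinf
  have hcen := bstar_self_mem_starCenter_of_mem_zetaNat_two ha
  rintro ⟨m, k, hmk⟩
  rw [bstar_add_right, ← two_zsmul] at hmk
  have hm : m = 0 := by
    have h := congrArg (bstar · a) hmk
    simp only [add_comm _ ((4 * k) • _), bstar_zsmul_add_left_of_mem_starCenter hcen,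
      zsmul_bstar_of_mem_zetaNat_two ha, zsmul_bstar_eq_zero_of_mem_starCenter hcen] at h
    have := @hinj (2 * m) 0 (by simpa using h)
    omega
  subst hm
  have := @hinj (4 * k) 2 (by simpa using hmk)
  omega

end EvenSpan

end LeftBrace

open LeftBrace in
theorem braceClosure_two_smul_not_isIdeal_general
    {A : Type u} [LeftBrace A] (a : A) (ha : a ∈ zetaNat A 2)
    (h2 : ¬ IsOfFinAddOrder (bstar a a)) :
    ¬ IsIdeal (braceClosure {a + a}) := by
  intro hI
  have h2a : a + a ∈ evenSpan a := ⟨1, 0, by rw [mul_one, two_zsmul]; simp⟩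
  have hsub := braceClosure_subset (isSubbrace_evenSpan ha) (Set.singleton_subset_iff.mpr h2a)
  exact bstar_add_self_not_mem_evenSpan ha h2 <|
    hsub (hI.star_mem_left a trivial _ (subset_braceClosure _ rfl))

open LeftBrace in
/-- **Lemma.** Let `A` be a left brace and `a ∈ ζ₂(⋆,A)` of infinite additive order with
`c = a ⋆ a` of infinite additive order.  Then `br(2a)` is not an ideal of `A`. -/
theorem braceClosure_two_smul_not_isIdeal
    {A : Type u} [LeftBrace A] (a : A) (ha : a ∈ zetaNat A 2)
    (h1 : ¬ IsOfFinAddOrder a) (h2 : ¬ IsOfFinAddOrder (bstar a a)) :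
    ¬ IsIdeal (braceClosure {a + a}) :=
  braceClosure_two_smul_not_isIdeal_general a ha h2
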